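/- Let Z ∈ ℂ^{M×d}, T_D ∈ ℂ^{N×d}. Over all RS analog beamformers T_RF (each row exactly one unit-modulus nonzero entry), the minimum of ‖Z − T_RF T_D‖_F² is attained by independently choosing, for each row m, the column n*(m) = argmax_n |Z(m,:)T_D(n,:)^H| and phase φ = arg(Z(m,:)T_D(n*(m),:)^H); the resulting minimum equals ‖Z‖² + Σ_m (‖T_D(n*(m),:)‖² − 2|Z(m,:)T_D(n*(m),:)^H|) when all rows of T_D have equal norm. -/

import Mathlib

open Matrix

/-- Row-`m`, column-`n` complex coefficient `ζ_{m,n} = Z(m,:) T_D(n,:)^H`. -/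
noncomputable def zeta {M N d : ℕ} (Z : Matrix (Fin M) (Fin d) ℂ) (TD : Matrix (Fin N) (Fin d) ℂ)
    (m : Fin M) (n : Fin N) : ℂ :=
  ∑ j, Z m j * (starRingEnd ℂ) (TD n j)

/-- Squared Frobenius norm of `Z − T_RF T_D`. -/
noncomputable def objRS {M N d : ℕ} (Z : Matrix (Fin M) (Fin d) ℂ) (TD : Matrix (Fin N) (Fin d) ℂ)
    (TRF : Matrix (Fin M) (Fin N) ℂ) : ℝ :=
  ∑ m, ∑ j, ‖(Z - TRF * TD) m j‖ ^ 2

/-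
Each antenna feeds exactly one RF chain, so row `m` of `T_RF` is `c • eₙ` with `|c| = 1`, and row
`m` of `Z − T_RF T_D` is `Z(m,:) − c T_D(n,:)`. Its squared norm is
`‖Z(m,:)‖² + ‖T_D(n,:)‖² − 2 Re(c̄ ζ_{m,n})`, so the objective decouples over rows. Since
`Re(c̄ ζ) ≤ |ζ|` with equality for `c = exp(i arg ζ)`, and the rows of `T_D` have equal norms, each
row is optimised by the phase of `ζ_{m,n}` at a column maximising `|ζ_{m,n}|`.
-/

open ComplexConjugate

lemma exists_eq_single_of_existsUnique_ne_zero {ι M : Type*} [DecidableEq ι] [Zero M]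
    {f : ι → M} (h : ∃! i, f i ≠ 0) : ∃ i, f i ≠ 0 ∧ f = Pi.single i (f i) := by
  obtain ⟨i, hi, huniq⟩ := h
  refine ⟨i, hi, funext fun k => ?_⟩
  by_cases hk : k = i
  · subst hk; simp
  · rw [Pi.single_eq_of_ne hk]
    exact not_not.mp fun hne => hk (huniq k hne)

lemma mul_apply_of_row_eq_single {l m n α : Type*} [Fintype m] [DecidableEq m]
    [NonUnitalNonAssocSemiring α] {A : Matrix l m α} (B : Matrix m n α) {i : l} {k : m} {c : α}
    (h : A i = Pi.single k c) (j : n) : (A * B) i j = c * B k j := by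
  rw [mul_apply', h, single_dotProduct]

lemma norm_sub_mul_sq (a b c : ℂ) :
    ‖a - c * b‖ ^ 2 = ‖a‖ ^ 2 + ‖c‖ ^ 2 * ‖b‖ ^ 2 - 2 * (conj c * (a * conj b)).re := by
  simp only [Complex.sq_norm, Complex.normSq_sub, map_mul]
  ring_nf

lemma sum_norm_sub_mul_sq {ι : Type*} [Fintype ι] (a b : ι → ℂ) (c : ℂ) :
    ∑ j, ‖a j - c * b j‖ ^ 2
      = ∑ j, ‖a j‖ ^ 2 + ‖c‖ ^ 2 * ∑ j, ‖b j‖ ^ 2 - 2 * (conj c * ∑ j, a j * conj (b j)).re := by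
  simp only [norm_sub_mul_sq, Finset.sum_sub_distrib, Finset.sum_add_distrib, Finset.mul_sum,
    Complex.re_sum]

lemma re_conj_mul_le_norm {c : ℂ} (hc : ‖c‖ = 1) (ζ : ℂ) : (conj c * ζ).re ≤ ‖ζ‖ :=
  calc (conj c * ζ).re ≤ ‖conj c * ζ‖ := Complex.re_le_norm _
    _ = ‖ζ‖ := by rw [norm_mul, Complex.norm_conj, hc, one_mul]

lemma re_conj_exp_arg_mul_I_mul (ζ : ℂ) :
    (conj (Complex.exp (ζ.arg * Complex.I)) * ζ).re = ‖ζ‖ := by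
  conv_lhs => rw [← Complex.norm_mul_exp_arg_mul_I ζ]
  rw [← Complex.exp_conj, mul_left_comm, ← Complex.exp_add]
  simp [Complex.conj_ofReal]

lemma sum_norm_sub_mul_row_sq {M N d : ℕ} (Z : Matrix (Fin M) (Fin d) ℂ)
    (TD : Matrix (Fin N) (Fin d) ℂ) {TRF : Matrix (Fin M) (Fin N) ℂ} {m : Fin M} {n : Fin N}
    {c : ℂ} (h : TRF m = Pi.single n c) :
    ∑ j, ‖(Z - TRF * TD) m j‖ ^ 2
      = ∑ j, ‖Z m j‖ ^ 2 + ‖c‖ ^ 2 * ∑ j, ‖TD n j‖ ^ 2 - 2 * (conj c * zeta Z TD m n).re := by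
  simp only [Matrix.sub_apply, mul_apply_of_row_eq_single TD h]
  exact sum_norm_sub_mul_sq _ _ _

theorem stmt_12 (M N d : ℕ) (Z : Matrix (Fin M) (Fin d) ℂ)
    (TD : Matrix (Fin N) (Fin d) ℂ)
    (hEq : ∀ n n' : Fin N, ∑ j, ‖TD n j‖ ^ 2 = ∑ j, ‖TD n' j‖ ^ 2)
    (nstar : Fin M → Fin N)
    (hstar : ∀ m n, ‖zeta Z TD m n‖ ≤ ‖zeta Z TD m (nstar m)‖) :
    let TRFstar : Matrix (Fin M) (Fin N) ℂ := Matrix.of fun m n =>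
      if n = nstar m then Complex.exp ((zeta Z TD m (nstar m)).arg * Complex.I) else 0
    (∀ TRF : Matrix (Fin M) (Fin N) ℂ,
        (∀ m, ∃! n, TRF m n ≠ 0) → (∀ m n, TRF m n ≠ 0 → ‖TRF m n‖ = 1) →
        objRS Z TD TRFstar ≤ objRS Z TD TRF) ∧
    objRS Z TD TRFstar
      = ∑ m, ∑ j, ‖Z m j‖ ^ 2
        + ∑ m, (∑ j, ‖TD (nstar m) j‖ ^ 2 - 2 * ‖zeta Z TD m (nstar m)‖) := by
  intro TRFstar
  have hrow_star : ∀ m, TRFstar m =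
      Pi.single (nstar m) (Complex.exp ((zeta Z TD m (nstar m)).arg * Complex.I)) :=
    fun m => funext fun n => (Pi.single_apply _ _ _).symm
  have hcost_star : ∀ m, ∑ j, ‖(Z - TRFstar * TD) m j‖ ^ 2
      = ∑ j, ‖Z m j‖ ^ 2 + (∑ j, ‖TD (nstar m) j‖ ^ 2 - 2 * ‖zeta Z TD m (nstar m)‖) := by
    intro m
    rw [sum_norm_sub_mul_row_sq Z TD (hrow_star m), Complex.norm_exp_ofReal_mul_I,
      re_conj_exp_arg_mul_I_mul]
    ring
  refine ⟨fun TRF hsupp hunit => Finset.sum_le_sum fun m _ => ?_, ?_⟩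
  · obtain ⟨n, hn, hrow⟩ := exists_eq_single_of_existsUnique_ne_zero (hsupp m)
    have hphase := (re_conj_mul_le_norm (hunit m n hn) (zeta Z TD m n)).trans (hstar m n)
    rw [hcost_star m, sum_norm_sub_mul_row_sq Z TD hrow, hunit m n hn, hEq n (nstar m)]
    linarith
  · simp only [objRS, hcost_star, Finset.sum_add_distrib]
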